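/- Let ℓ ≥ 1, let λ₁, …, λ_ℓ be real numbers and c₁, …, c_ℓ be complex numbers, and define K(τ) = ∑_{k=1}^ℓ c_k e^{i τ λ_k} for τ ∈ ℝ. If K(τ) → 0 as τ → +∞, then K(τ) = 0 for all τ ∈ ℝ; in particular ∑_{k=1}^ℓ c_k = 0. -/

import Mathlib

/-!
Put `g = (e^{iλ_k})_k` in the compact group `𝕋^ℓ`. Compactness gives times `s_n → ∞` with
`g^{s_n} → 1`, i.e. `e^{i s_n λ_k} → 1` for every `k`, hence `K(τ + s_n) → K(τ)` for each fixed
`τ`. Since also `K(τ + s_n) → 0`, `K(τ) = 0`.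
-/

open Complex MeasureTheory Metric Set Filter
open scoped Real Topology NNReal ComplexConjugate

noncomputable section

/-- The Laplacian of `u : ℂ → E`, computed via iterated directional (Fréchet) derivatives
in the real coordinate directions `1` and `I` of `ℂ ≅ ℝ²`. -/
def lap2 {E : Type*} [NormedAddCommGroup E] [NormedSpace ℝ E] (u : ℂ → E) (x : ℂ) : E :=
  fderiv ℝ (fun y => fderiv ℝ u y 1) x 1 + fderiv ℝ (fun y => fderiv ℝ u y Complex.I) x Complex.I

/-- The Wirtinger derivative `∂/∂z = (1/2)(∂_{x₁} - i ∂_{x₂})`. -/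
def dz (u : ℂ → ℂ) (x : ℂ) : ℂ :=
  (fderiv ℝ u x 1 - Complex.I * fderiv ℝ u x Complex.I) / 2

/-- The Wirtinger derivative `∂/∂z̄ = (1/2)(∂_{x₁} + i ∂_{x₂})`. -/
def dzbar (u : ℂ → ℂ) (x : ℂ) : ℂ :=
  (fderiv ℝ u x 1 + Complex.I * fderiv ℝ u x Complex.I) / 2

/-- The normal derivative on the unit circle: the unit outer normal at `x ∈ S¹` is `x` itself. -/
def normalDeriv (u : ℂ → ℂ) (x : ℂ) : ℂ := fderiv ℝ u x x

/-- Membership in the Sobolev space `H¹(s)` (strong form): differentiable on `s`, and the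
function together with its gradient are square integrable on `s`. -/
def MemH1 (s : Set ℂ) (u : ℂ → ℂ) : Prop :=
  (∀ x ∈ s, DifferentiableAt ℝ u x) ∧
  MemLp u 2 (volume.restrict s) ∧
  MemLp (fun x => fderiv ℝ u x) 2 (volume.restrict s)

/-- The Hölder space `C^{1+ℓ}(s)` for some `0 < ℓ ≤ 1`: `C¹` with Hölder continuous
first derivative. -/
def HolderC1 (s : Set ℂ) (f : ℂ → ℂ) : Prop :=
  ∃ (ℓ C : ℝ≥0), 0 < ℓ ∧ ℓ ≤ 1 ∧ ContDiffOn ℝ 1 f s ∧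
    HolderOnWith C ℓ (fun x => fderivWithin ℝ f s x) s

/-- The open boundary arc `{(cos θ, sin θ) : θ ∈ (-t, t)}` of the unit circle. -/
def arc (t : ℝ) : Set ℂ := (fun θ : ℝ => Complex.exp (θ * Complex.I)) '' Set.Ioo (-t) t

/-- The set of partial Cauchy data for the Schrödinger operator `Δ + q` on the unit disc:
pairs of (Dirichlet data on `Γp`, Neumann data on `Γme`) of `H¹` solutions vanishing
on `Γm`. -/
def cauchyData (q : ℂ → ℂ) (Γp Γm Γme : Set ℂ) : Set ((ℂ → ℂ) × (ℂ → ℂ)) :=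
  {fg | ∃ u : ℂ → ℂ, MemH1 (ball (0:ℂ) 1) u ∧
    (∀ x ∈ ball (0:ℂ) 1, lap2 u x + q x * u x = 0) ∧
    (∀ x ∈ Γm, u x = 0) ∧
    (∀ x ∈ Γp, fg.1 x = u x) ∧
    (∀ x ∈ Γme, fg.2 x = normalDeriv u x)}

theorem exists_tendsto_atTop_pow_tendsto_one {G : Type*} [Group G] [TopologicalSpace G]
    [IsTopologicalGroup G] [CompactSpace G] [FirstCountableTopology G] (g : G) :
    ∃ s : ℕ → ℕ, Tendsto s atTop atTop ∧ Tendsto (fun n => g ^ s n) atTop (𝓝 1) := by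
  obtain ⟨a, φ, hφ, hφa⟩ := CompactSpace.tendsto_subseq (fun n => g ^ n)
  have hφa₂ : Tendsto (fun n => g ^ φ (2 * n)) atTop (𝓝 a) :=
    hφa.comp (tendsto_id.const_mul_atTop' two_pos)
  -- `g ^ (φ (2n) - φ n) = g ^ φ (2n) * (g ^ φ n)⁻¹ → a * a⁻¹`, and the gap is at least `n`
  refine ⟨fun n => φ (2 * n) - φ n, tendsto_atTop_mono (fun n => ?_) tendsto_id, ?_⟩
  · have hgap := hφ.add_le_nat n n
    rw [← two_mul] at hgap
    exact Nat.le_sub_of_add_le hgap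
  · have hquot : Tendsto (fun n => g ^ φ (2 * n) * (g ^ φ n)⁻¹) atTop (𝓝 1) := by
      simpa using hφa₂.mul hφa.inv
    exact hquot.congr fun n => (pow_sub g (hφ.monotone (by omega))).symm

theorem exists_tendsto_atTop_forall_exp_tendsto_one {ι : Type*} [Finite ι] (lam : ι → ℝ) :
    ∃ s : ℕ → ℕ, Tendsto s atTop atTop ∧
      ∀ k, Tendsto (fun n => Complex.exp (Complex.I * ((s n : ℝ) : ℂ) * (lam k : ℂ)))
        atTop (𝓝 1) := by
  obtain ⟨s, hs_top, hs_one⟩ := exists_tendsto_atTop_pow_tendsto_one (fun k => Circle.exp (lam k))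
  refine ⟨s, hs_top, fun k => ?_⟩
  have := (continuous_subtype_val.tendsto _).comp (tendsto_pi_nhds.1 hs_one k)
  convert this using 2 with n
  · change _ = ((Circle.exp (lam k) ^ s n : Circle) : ℂ)
    rw [← Circle.exp_nsmul, Circle.coe_exp, nsmul_eq_mul]
    congr 1
    push_cast
    ring
  · simp

theorem tendsto_sum_mul_exp_add {ι : Type*} [Fintype ι] (c : ι → ℂ) (lam : ι → ℝ) (τ : ℝ)
    {s : ℕ → ℝ}
    (hs : ∀ k, Tendsto (fun n => Complex.exp (Complex.I * (s n : ℂ) * (lam k : ℂ))) atTop (𝓝 1)) :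
    Tendsto (fun n => ∑ k, c k * Complex.exp (Complex.I * ((τ + s n : ℝ) : ℂ) * (lam k : ℂ)))
      atTop (𝓝 (∑ k, c k * Complex.exp (Complex.I * (τ : ℂ) * (lam k : ℂ)))) := by
  refine tendsto_finsetSum _ fun k _ => ?_
  have := (hs k).const_mul (c k * Complex.exp (Complex.I * (τ : ℂ) * (lam k : ℂ)))
  rw [mul_one] at this
  refine this.congr fun n => ?_
  push_cast
  rw [mul_add, add_mul, Complex.exp_add, mul_assoc]

theorem exponential_sum_tendsto_zero_vanishes_general
    (ℓ : ℕ) (lam : Fin ℓ → ℝ) (c : Fin ℓ → ℂ)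
    (h : Filter.Tendsto
      (fun τ : ℝ => ∑ k : Fin ℓ, c k * Complex.exp (Complex.I * (τ : ℂ) * (lam k : ℂ)))
      Filter.atTop (nhds 0)) :
    (∀ τ : ℝ, ∑ k : Fin ℓ, c k * Complex.exp (Complex.I * (τ : ℂ) * (lam k : ℂ)) = 0)
    ∧ ∑ k : Fin ℓ, c k = 0 := by
  obtain ⟨s, hs_top, hs_exp⟩ := exists_tendsto_atTop_forall_exp_tendsto_one lam
  have hK : ∀ τ : ℝ, ∑ k : Fin ℓ, c k * Complex.exp (Complex.I * (τ : ℂ) * (lam k : ℂ)) = 0 :=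
    fun τ => tendsto_nhds_unique (tendsto_sum_mul_exp_add c lam τ hs_exp)
      (h.comp (tendsto_atTop_add_const_left _ τ (tendsto_natCast_atTop_atTop.comp hs_top)))
  exact ⟨hK, by simpa using hK 0⟩

/-- **Bohr's theorem for finite exponential sums**: a finite trigonometric sum
`K(τ) = ∑ c_k e^{iτλ_k}` with real frequencies that tends to `0` as `τ → +∞` vanishes
identically; in particular `∑ c_k = K(0) = 0`. -/
theorem exponential_sum_tendsto_zero_vanishes
    (ℓ : ℕ) (hℓ : 1 ≤ ℓ) (lam : Fin ℓ → ℝ) (c : Fin ℓ → ℂ)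
    (h : Filter.Tendsto
      (fun τ : ℝ => ∑ k : Fin ℓ, c k * Complex.exp (Complex.I * (τ : ℂ) * (lam k : ℂ)))
      Filter.atTop (nhds 0)) :
    (∀ τ : ℝ, ∑ k : Fin ℓ, c k * Complex.exp (Complex.I * (τ : ℂ) * (lam k : ℂ)) = 0)
    ∧ ∑ k : Fin ℓ, c k = 0 :=
  exponential_sum_tendsto_zero_vanishes_general ℓ lam c h
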